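/- For matrices A (a×b), B (c×d) and positive integers T₁, T₂ with appropriate divisibility (T₁, T₂ both common multiples of the inner dimensions after padding), the mixed-product identity ((A⊗I_{T₁/b})(B⊗I_{T₁/c}))⊗I_{T₂} = (A⊗I_{T₂/b}⊗I_{T₁})(B⊗I_{T₂/c}⊗I_{T₁}) holds whenever b | T₁, c | T₁, b | T₂, c | T₂. -/
import Mathlib


/-- Kronecker product of real matrices with `Fin` index flattening. -/
def kron {m n p q : ℕ} (A : Matrix (Fin m) (Fin n) ℝ) (B : Matrix (Fin p) (Fin q) ℝ) :
    Matrix (Fin (m * p)) (Fin (n * q)) ℝ :=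
  Matrix.reindex finProdFinEquiv finProdFinEquiv (Matrix.kroneckerMap (· * ·) A B)

/-- Recasting a matrix along equalities of its dimensions. -/
def castM {m n m' n' : ℕ} (hm : m = m') (hn : n = n') (A : Matrix (Fin m) (Fin n) ℝ) :
    Matrix (Fin m') (Fin n') ℝ :=
  Matrix.reindex (finCongr hm) (finCongr hn) A

lemma castM_apply {m n m' n' : ℕ} (hm : m = m') (hn : n = n') (A : Matrix (Fin m) (Fin n) ℝ)
    (i : Fin m') (j : Fin n') :
    castM hm hn A i j = A (Fin.cast hm.symm i) (Fin.cast hn.symm j) := rfl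

lemma castM_rfl {m n : ℕ} (hm : m = m) (hn : n = n) (A : Matrix (Fin m) (Fin n) ℝ) :
    castM hm hn A = A := by
  ext i j; rfl

lemma castM_heq {m n m' n' : ℕ} (hm : m = m') (hn : n = n') (A : Matrix (Fin m) (Fin n) ℝ) :
    HEq (castM hm hn A) A := by
  subst hm; subst hn; rw [castM_rfl]

lemma kron_apply {m n p q : ℕ} (A : Matrix (Fin m) (Fin n) ℝ) (B : Matrix (Fin p) (Fin q) ℝ)
    (i : Fin (m * p)) (j : Fin (n * q)) :
    kron A B i j = A i.divNat j.divNat * B i.modNat j.modNat := by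
  simp [kron, Matrix.reindex_apply, Matrix.submatrix_apply]

lemma kron_one_one {m n : ℕ} :
    kron (1 : Matrix (Fin m) (Fin m) ℝ) (1 : Matrix (Fin n) (Fin n) ℝ) = 1 := by
  unfold kron
  rw [show Matrix.kroneckerMap (· * ·) (1 : Matrix (Fin m) (Fin m) ℝ)
      (1 : Matrix (Fin n) (Fin n) ℝ) = (1 : Matrix (Fin m × Fin n) (Fin m × Fin n) ℝ) from
    Matrix.one_kronecker_one]
  simp

lemma kron_mul_kron {l m n l' m' n' : ℕ} (A : Matrix (Fin l) (Fin m) ℝ)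
    (B : Matrix (Fin m) (Fin n) ℝ) (A' : Matrix (Fin l') (Fin m') ℝ)
    (B' : Matrix (Fin m') (Fin n') ℝ) :
    kron (A * B) (A' * B') = kron A A' * kron B B' := by
  unfold kron
  rw [show Matrix.kroneckerMap (· * ·) (A * B) (A' * B') =
      Matrix.kroneckerMap (· * ·) A A' * Matrix.kroneckerMap (· * ·) B B' from
    Matrix.mul_kronecker_mul A B A' B']
  simp [Matrix.reindex_apply, Matrix.submatrix_mul_equiv]

lemma kron_mul_one {l m n k : ℕ} (M : Matrix (Fin l) (Fin m) ℝ) (N : Matrix (Fin m) (Fin n) ℝ) :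
    kron (M * N) (1 : Matrix (Fin k) (Fin k) ℝ)
      = kron M (1 : Matrix (Fin k) (Fin k) ℝ) * kron N (1 : Matrix (Fin k) (Fin k) ℝ) := by
  have h := kron_mul_kron M N (1 : Matrix (Fin k) (Fin k) ℝ) (1 : Matrix (Fin k) (Fin k) ℝ)
  rwa [Matrix.one_mul] at h

lemma kron_assoc {m n p q s t : ℕ} (A : Matrix (Fin m) (Fin n) ℝ) (B : Matrix (Fin p) (Fin q) ℝ)
    (C : Matrix (Fin s) (Fin t) ℝ) :
    kron A (kron B C) = castM (Nat.mul_assoc m p s) (Nat.mul_assoc n q t) (kron (kron A B) C) := by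
  ext i j
  rw [kron_apply, kron_apply, castM_apply, kron_apply, kron_apply]
  have e1 : ((Fin.cast (Nat.mul_assoc m p s).symm i).divNat).divNat = i.divNat := by
    apply Fin.ext
    simp only [Fin.divNat, Fin.cast]
    rw [Nat.div_div_eq_div_mul, Nat.mul_comm s p]
  have e2 : ((Fin.cast (Nat.mul_assoc m p s).symm i).divNat).modNat = i.modNat.divNat := by
    apply Fin.ext
    simp only [Fin.divNat, Fin.modNat, Fin.cast]
    exact (Nat.mod_mul_left_div_self i s p).symm
  have e3 : (Fin.cast (Nat.mul_assoc m p s).symm i).modNat = i.modNat.modNat := by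
    apply Fin.ext
    simp only [Fin.modNat, Fin.cast]
    exact (Nat.mod_mod_of_dvd i (Dvd.intro_left p rfl)).symm
  have f1 : ((Fin.cast (Nat.mul_assoc n q t).symm j).divNat).divNat = j.divNat := by
    apply Fin.ext
    simp only [Fin.divNat, Fin.cast]
    rw [Nat.div_div_eq_div_mul, Nat.mul_comm t q]
  have f2 : ((Fin.cast (Nat.mul_assoc n q t).symm j).divNat).modNat = j.modNat.divNat := by
    apply Fin.ext
    simp only [Fin.divNat, Fin.modNat, Fin.cast]
    exact (Nat.mod_mul_left_div_self j t q).symm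
  have f3 : (Fin.cast (Nat.mul_assoc n q t).symm j).modNat = j.modNat.modNat := by
    apply Fin.ext
    simp only [Fin.modNat, Fin.cast]
    exact (Nat.mod_mod_of_dvd j (Dvd.intro_left q rfl)).symm
  rw [e1, e2, e3, f1, f2, f3, mul_assoc]

lemma matrix_mul_heq {m n k m' n' k' : ℕ} (hm : m = m') (hn : n = n') (hk : k = k')
    {M : Matrix (Fin m) (Fin n) ℝ} {N : Matrix (Fin n) (Fin k) ℝ}
    {M' : Matrix (Fin m') (Fin n') ℝ} {N' : Matrix (Fin n') (Fin k') ℝ}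
    (h1 : HEq M M') (h2 : HEq N N') : HEq (M * N) (M' * N') := by
  subst hm; subst hn; subst hk
  rw [eq_of_heq h1, eq_of_heq h2]

lemma kron_heq_left {m n m' n' p q : ℕ} (hm : m = m') (hn : n = n')
    {M : Matrix (Fin m) (Fin n) ℝ} {M' : Matrix (Fin m') (Fin n') ℝ}
    (h : HEq M M') (N : Matrix (Fin p) (Fin q) ℝ) :
    HEq (kron M N) (kron M' N) := by
  subst hm; subst hn
  rw [eq_of_heq h]

lemma kron_one_heq {m n u v w z : ℕ} (h : u * v = w * z) (X : Matrix (Fin m) (Fin n) ℝ) :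
    HEq (kron (kron X (1 : Matrix (Fin u) (Fin u) ℝ)) (1 : Matrix (Fin v) (Fin v) ℝ))
        (kron (kron X (1 : Matrix (Fin w) (Fin w) ℝ)) (1 : Matrix (Fin z) (Fin z) ℝ)) := by
  have e1 : kron X (1 : Matrix (Fin (u * v)) (Fin (u * v)) ℝ)
      = castM (Nat.mul_assoc m u v) (Nat.mul_assoc n u v)
          (kron (kron X (1 : Matrix (Fin u) (Fin u) ℝ)) (1 : Matrix (Fin v) (Fin v) ℝ)) := by
    rw [← kron_one_one (m := u) (n := v)]
    exact kron_assoc _ _ _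
  have e2 : kron X (1 : Matrix (Fin (w * z)) (Fin (w * z)) ℝ)
      = castM (Nat.mul_assoc m w z) (Nat.mul_assoc n w z)
          (kron (kron X (1 : Matrix (Fin w) (Fin w) ℝ)) (1 : Matrix (Fin z) (Fin z) ℝ)) := by
    rw [← kron_one_one (m := w) (n := z)]
    exact kron_assoc _ _ _
  have h1 : HEq (kron (kron X (1 : Matrix (Fin u) (Fin u) ℝ)) (1 : Matrix (Fin v) (Fin v) ℝ))
      (kron X (1 : Matrix (Fin (u * v)) (Fin (u * v)) ℝ)) := by
    rw [e1]; exact (castM_heq _ _ _).symm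
  have h2 : HEq (kron (kron X (1 : Matrix (Fin w) (Fin w) ℝ)) (1 : Matrix (Fin z) (Fin z) ℝ))
      (kron X (1 : Matrix (Fin (w * z)) (Fin (w * z)) ℝ)) := by
    rw [e2]; exact (castM_heq _ _ _).symm
  have h3 : HEq (kron X (1 : Matrix (Fin (u * v)) (Fin (u * v)) ℝ))
      (kron X (1 : Matrix (Fin (w * z)) (Fin (w * z)) ℝ)) := by rw [h]
  exact h1.trans (h3.trans h2.symm)

lemma aux_eq {c q bp s br : ℕ} (h1 : c * q = bp) (h2 : c * s = br) : q * br = s * bp := by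
  rcases Nat.eq_zero_or_pos c with hc | hc
  · subst hc
    simp only [Nat.zero_mul] at h1 h2
    subst h1; subst h2; simp
  · apply Nat.eq_of_mul_eq_mul_left hc
    calc c * (q * br) = (c * q) * br := by ring
      _ = bp * br := by rw [h1]
      _ = bp * (c * s) := by rw [h2]
      _ = c * (s * bp) := by ring

lemma main_aux (a b c d T₁ T₂ p q r s : ℕ)
    (hp : b * p = T₁) (hq : c * q = T₁) (hr : b * r = T₂) (hs : c * s = T₂)
    (e₃ : b * r * T₁ = T₂ * T₁) (e₄ : c * s * T₁ = T₂ * T₁)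
    (A : Matrix (Fin a) (Fin b) ℝ) (B : Matrix (Fin c) (Fin d) ℝ) :
    HEq
      (kron
        (castM rfl hp (kron A (1 : Matrix (Fin p) (Fin p) ℝ)) *
          castM hq rfl (kron B (1 : Matrix (Fin q) (Fin q) ℝ)))
        (1 : Matrix (Fin T₂) (Fin T₂) ℝ))
      (castM rfl e₃
          (kron (kron A (1 : Matrix (Fin r) (Fin r) ℝ)) (1 : Matrix (Fin T₁) (Fin T₁) ℝ)) *
        castM e₄ rfl
          (kron (kron B (1 : Matrix (Fin s) (Fin s) ℝ)) (1 : Matrix (Fin T₁) (Fin T₁) ℝ))) := by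
  subst hp; subst hr
  rw [castM_rfl, castM_rfl, kron_mul_one]
  have key : q * (b * r) = s * (b * p) := aux_eq hq hs
  apply matrix_mul_heq
  · show a * p * (b * r) = a * r * (b * p); ring
  · show b * p * (b * r) = b * r * (b * p); ring
  · show d * q * (b * r) = d * s * (b * p)
    calc d * q * (b * r) = d * (q * (b * r)) := by ring
      _ = d * (s * (b * p)) := by rw [key]
      _ = d * s * (b * p) := by ring
  · exact kron_one_heq (by ring) A
  · refine HEq.trans (kron_heq_left ?_ rfl (castM_heq _ _ _) _) ?_
    · exact hq.symm
    · exact (kron_one_heq key B).trans (castM_heq _ _ _).symm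

/-- for `A : a×b`, `B : c×d` and `T₁, T₂` common multiples of the inner
dimensions `b, c`, one has
`((A ⊗ I_{T₁/b})(B ⊗ I_{T₁/c})) ⊗ I_{T₂} = (A ⊗ I_{T₂/b} ⊗ I_{T₁})(B ⊗ I_{T₂/c} ⊗ I_{T₁})`
(up to the canonical identification of index types). -/
theorem kron_mixed_product_identity (a b c d T₁ T₂ : ℕ)
    (hb1 : b ∣ T₁) (hc1 : c ∣ T₁) (hb2 : b ∣ T₂) (hc2 : c ∣ T₂)
    (A : Matrix (Fin a) (Fin b) ℝ) (B : Matrix (Fin c) (Fin d) ℝ) :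
    HEq
      (kron
        (castM rfl (Nat.mul_div_cancel' hb1)
            (kron A (1 : Matrix (Fin (T₁ / b)) (Fin (T₁ / b)) ℝ)) *
          castM (Nat.mul_div_cancel' hc1) rfl
            (kron B (1 : Matrix (Fin (T₁ / c)) (Fin (T₁ / c)) ℝ)))
        (1 : Matrix (Fin T₂) (Fin T₂) ℝ))
      (castM rfl (by rw [Nat.mul_div_cancel' hb2])
          (kron (kron A (1 : Matrix (Fin (T₂ / b)) (Fin (T₂ / b)) ℝ))
            (1 : Matrix (Fin T₁) (Fin T₁) ℝ)) *
        castM (by rw [Nat.mul_div_cancel' hc2]) rfl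
          (kron (kron B (1 : Matrix (Fin (T₂ / c)) (Fin (T₂ / c)) ℝ))
            (1 : Matrix (Fin T₁) (Fin T₁) ℝ))) := by
  exact main_aux a b c d T₁ T₂ (T₁ / b) (T₁ / c) (T₂ / b) (T₂ / c)
    (Nat.mul_div_cancel' hb1) (Nat.mul_div_cancel' hc1)
    (Nat.mul_div_cancel' hb2) (Nat.mul_div_cancel' hc2)
    (by rw [Nat.mul_div_cancel' hb2]) (by rw [Nat.mul_div_cancel' hc2]) A B
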